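/- arXiv:2510.25059 — 5 statements merged into one kernel-verified Lean document; each statement's English description precedes it below -/
import Mathlib

section
/- For every positive integer n and real number p with 0 ≤ p ≤ 1, the sum over k from 1 to n of H_k · C(n,k) · p^k · (1-p)^(n-k) equals the sum over i from 1 to n of (1 - (1-p)^i)/i, where H_k = ∑_{i=1}^k 1/i is the k-th harmonic number. -/
open Finset

private noncomputable def Hh (k : ℕ) : ℝ := ∑ i ∈ Finset.Icc 1 k, (1 : ℝ) / i

private lemma Hh_zero : Hh 0 = 0 := by simp [Hh]

private lemma Hh_succ (k : ℕ) : Hh (k + 1) = Hh k + 1 / ((k : ℝ) + 1) := by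
  rw [Hh, Hh, Finset.sum_Icc_succ_top (by omega)]
  push_cast; ring

private lemma key (p : ℝ) (n : ℕ) :
    ∑ j ∈ range (n + 1), (1 / ((j : ℝ) + 1)) * (n.choose j : ℝ) * p ^ (j + 1) * (1 - p) ^ (n - j)
      = (1 - (1 - p) ^ (n + 1)) / ((n : ℝ) + 1) := by
  have hb : (∑ m ∈ range (n + 2), p ^ m * (1 - p) ^ (n + 1 - m) * ((n + 1).choose m : ℝ)) = 1 := by
    rw [← add_pow]; norm_num
  rw [Finset.sum_range_succ'] at hb
  simp only [Nat.succ_sub_succ, pow_zero, Nat.sub_zero, Nat.choose_zero_right, Nat.cast_one,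
    one_mul, mul_one] at hb
  have hsum : ∑ j ∈ range (n + 1), ((n + 1).choose (j + 1) : ℝ) * p ^ (j + 1) * (1 - p) ^ (n - j)
      = 1 - (1 - p) ^ (n + 1) := by
    have heq : ∑ j ∈ range (n + 1), ((n + 1).choose (j + 1) : ℝ) * p ^ (j + 1) * (1 - p) ^ (n - j)
        = ∑ x ∈ range (n + 1), p ^ (x + 1) * (1 - p) ^ (n - x) * ((n + 1).choose (x + 1) : ℝ) := by
      apply Finset.sum_congr rfl; intro j hj; ring
    rw [heq]; linarith [hb]
  have hn1 : ((n : ℝ) + 1) ≠ 0 := by positivity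
  rw [eq_div_iff hn1, ← hsum, Finset.sum_mul]
  apply Finset.sum_congr rfl
  intro j hj
  have hc : ((n : ℝ) + 1) * (n.choose j : ℝ) = ((n + 1).choose (j + 1) : ℝ) * ((j : ℝ) + 1) := by
    have h := congrArg (Nat.cast (R := ℝ)) (Nat.add_one_mul_choose_eq n j)
    push_cast at h
    linarith [h]
  have hj1 : ((j : ℝ) + 1) ≠ 0 := by positivity
  field_simp
  linear_combination (p ^ (j + 1) * (1 - p) ^ (n - j)) * hc

private lemma T1lem (p : ℝ) (n : ℕ) :
    ∑ j ∈ range (n + 1), Hh j * (n.choose j : ℝ) * p ^ (j + 1) * (1 - p) ^ (n - j)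
      = p * ∑ j ∈ range (n + 1), Hh j * (n.choose j : ℝ) * p ^ j * (1 - p) ^ (n - j) := by
  rw [Finset.mul_sum]
  apply Finset.sum_congr rfl
  intro j hj; ring

private lemma Alem (p : ℝ) (n : ℕ) :
    ∑ j ∈ range (n + 1), Hh (j + 1) * (n.choose (j + 1) : ℝ) * p ^ (j + 1) * (1 - p) ^ (n - j)
      = (1 - p) * ∑ j ∈ range (n + 1), Hh j * (n.choose j : ℝ) * p ^ j * (1 - p) ^ (n - j) := by
  rw [Finset.sum_range_succ, Nat.choose_succ_self]
  rw [Finset.mul_sum, Finset.sum_range_succ']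
  simp only [Hh_zero, Nat.cast_zero, zero_mul, mul_zero, add_zero]
  apply Finset.sum_congr rfl
  intro j hj
  simp only [Finset.mem_range] at hj
  have h : n - j = (n - (j + 1)) + 1 := by omega
  rw [h]; ring

private lemma Srec (p : ℝ) (n : ℕ) :
    ∑ j ∈ range (n + 2), Hh j * ((n + 1).choose j : ℝ) * p ^ j * (1 - p) ^ (n + 1 - j)
      = (∑ j ∈ range (n + 1), Hh j * (n.choose j : ℝ) * p ^ j * (1 - p) ^ (n - j))
        + (1 - (1 - p) ^ (n + 1)) / ((n : ℝ) + 1) := by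
  rw [Finset.sum_range_succ']
  simp only [Hh_zero, zero_mul, add_zero, Nat.succ_sub_succ]
  have expand : ∀ j ∈ range (n + 1),
      Hh (j + 1) * ((n + 1).choose (j + 1) : ℝ) * p ^ (j + 1) * (1 - p) ^ (n - j)
        = Hh j * (n.choose j : ℝ) * p ^ (j + 1) * (1 - p) ^ (n - j)
          + Hh (j + 1) * (n.choose (j + 1) : ℝ) * p ^ (j + 1) * (1 - p) ^ (n - j)
          + (1 / ((j : ℝ) + 1)) * (n.choose j : ℝ) * p ^ (j + 1) * (1 - p) ^ (n - j) := by
    intro j hj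
    rw [Nat.choose_succ_succ]
    push_cast
    rw [Hh_succ]
    ring
  rw [Finset.sum_congr rfl expand, Finset.sum_add_distrib, Finset.sum_add_distrib,
    T1lem, Alem, key]
  ring

private lemma main_lemma (p : ℝ) : ∀ n : ℕ,
    ∑ j ∈ range (n + 1), Hh j * (n.choose j : ℝ) * p ^ j * (1 - p) ^ (n - j)
      = ∑ i ∈ Finset.Icc 1 n, (1 - (1 - p) ^ i) / i
  | 0 => by simp [Hh_zero]
  | n + 1 => by
    rw [Srec, main_lemma p n, Finset.sum_Icc_succ_top (by omega)]
    push_cast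
    ring

theorem mneimneh_identity (n : ℕ) (hn : 1 ≤ n) (p : ℝ) (hp0 : 0 ≤ p) (hp1 : p ≤ 1) :
    ∑ k ∈ Finset.Icc 1 n, (∑ i ∈ Finset.Icc 1 k, (1 : ℝ) / i) *
        (n.choose k : ℝ) * p ^ k * (1 - p) ^ (n - k)
      = ∑ i ∈ Finset.Icc 1 n, (1 - (1 - p) ^ i) / i := by
  rw [← main_lemma p n]
  have hset : range (n + 1) = insert 0 (Finset.Icc 1 n) := by
    ext x; simp [Finset.mem_range, Finset.mem_Icc]; omega
  rw [hset, Finset.sum_insert (by simp)]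
  simp [Hh_zero, Hh]
end

section
/- For every positive integer n and complex numbers λ, μ, the identity ∑_{k=1}^n C(n,k) H_k λ^(n-k) μ^k = H_n (λ+μ)^n - ∑_{j=1}^n λ^j (λ+μ)^(n-j) / j holds, where H_k is the k-th harmonic number. -/
/-!
Both sides, as functions of `n`, satisfy `F (n + 1) = (x + y) F n + ((x + y)^(n+1) - x^(n+1)) / (n + 1)`
and vanish at `n = 0`. For the left side this follows from Pascal's rule and
`H_(k+1) = H_k + 1/(k+1)`, the inhomogeneous term being the integrated binomial theorem
`∑ C(n,j) x^(n-j) y^(j+1) / (j+1) = ((x + y)^(n+1) - x^(n+1)) / (n+1)`.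
-/

open Finset

lemma sum_Icc_one_eq_sum_range {M : Type*} [AddCommMonoid M] {f : ℕ → M} (hf : f 0 = 0)
    (n : ℕ) : ∑ k ∈ Icc 1 n, f k = ∑ k ∈ range (n + 1), f k := by
  refine sum_subset (fun k hk => ?_) (fun k hk hk' => ?_)
  · simp only [mem_Icc, mem_range] at hk ⊢
    omega
  · obtain rfl : k = 0 := by
      simp only [mem_Icc, mem_range] at hk hk'
      omega
    exact hf

section

variable {K : Type*} [Field K]

noncomputable def harmonicBinomialSum (x y : K) (n : ℕ) : K :=
  ∑ k ∈ range (n + 1), n.choose k * (harmonic k : K) * x ^ (n - k) * y ^ k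

lemma mul_harmonicBinomialSum_eq_sum (x y : K) (n : ℕ) :
    x * harmonicBinomialSum x y n = ∑ j ∈ range (n + 1),
      n.choose (j + 1) * (harmonic (j + 1) : K) * x ^ (n - j) * y ^ (j + 1) := by
  rw [harmonicBinomialSum, sum_range_succ', sum_range_succ, Nat.choose_succ_self]
  simp only [harmonic_zero, Rat.cast_zero, mul_zero, zero_mul, Nat.cast_zero, add_zero, mul_sum]
  refine sum_congr rfl fun j hj => ?_
  rw [show n - j = n - (j + 1) + 1 by grind, pow_succ]
  ring

lemma sum_pow_mul_pow_div_succ (x a : K) (n : ℕ) :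
    ∑ j ∈ range (n + 2), x ^ j * a ^ (n + 1 - j) / j
      = a * ∑ j ∈ range (n + 1), x ^ j * a ^ (n - j) / j + x ^ (n + 1) / (n + 1) := by
  rw [sum_range_succ, mul_sum, Nat.sub_self, pow_zero, mul_one, Nat.cast_add_one]
  congr 1
  refine sum_congr rfl fun j hj => ?_
  rw [show n + 1 - j = n - j + 1 by grind, pow_succ]
  ring

variable [CharZero K]

lemma cast_harmonic_succ (k : ℕ) : (harmonic (k + 1) : K) = harmonic k + 1 / (k + 1) := by
  push_cast [harmonic_succ]
  ring

lemma sum_choose_mul_pow_div_succ (x y : K) (n : ℕ) :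
    ∑ j ∈ range (n + 1), n.choose j * x ^ (n - j) * y ^ (j + 1) / (j + 1)
      = ((x + y) ^ (n + 1) - x ^ (n + 1)) / (n + 1) := by
  have hchoose (j : ℕ) : (n.choose j : K) / (j + 1) = (n + 1).choose (j + 1) / (n + 1) := by
    rw [div_eq_div_iff (Nat.cast_add_one_ne_zero j) (Nat.cast_add_one_ne_zero n)]
    exact_mod_cast (mul_comm _ _).trans (Nat.add_one_mul_choose_eq n j)
  have hbinom : (x + y) ^ (n + 1) - x ^ (n + 1)
      = ∑ j ∈ range (n + 1), y ^ (j + 1) * x ^ (n - j) * (n + 1).choose (j + 1) := by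
    rw [add_comm x, add_pow, sum_range_succ']
    simp
  rw [hbinom, sum_div]
  refine sum_congr rfl fun j _ => ?_
  rw [mul_div_right_comm, mul_div_right_comm, hchoose]
  ring

lemma harmonicBinomialSum_succ (x y : K) (n : ℕ) :
    harmonicBinomialSum x y (n + 1)
      = (x + y) * harmonicBinomialSum x y n + ((x + y) ^ (n + 1) - x ^ (n + 1)) / (n + 1) := by
  have hshift : harmonicBinomialSum x y (n + 1) = ∑ j ∈ range (n + 1),
      (n + 1).choose (j + 1) * (harmonic (j + 1) : K) * x ^ (n - j) * y ^ (j + 1) := by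
    simp [harmonicBinomialSum, sum_range_succ' _ (n + 1)]
  have hy : y * harmonicBinomialSum x y n
      = ∑ j ∈ range (n + 1), n.choose j * (harmonic j : K) * x ^ (n - j) * y ^ (j + 1) := by
    rw [harmonicBinomialSum, mul_sum]
    exact sum_congr rfl fun j _ => by ring
  rw [hshift, add_mul, mul_harmonicBinomialSum_eq_sum, hy, ← sum_choose_mul_pow_div_succ,
    ← sum_add_distrib, ← sum_add_distrib]
  refine sum_congr rfl fun j _ => ?_
  rw [Nat.choose_succ_succ', cast_harmonic_succ]
  push_cast
  ring

/-- The `j = 0` term of the last sum is `a ^ n / 0 = 0`. -/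
theorem harmonicBinomialSum_eq (x y : K) (n : ℕ) :
    harmonicBinomialSum x y n
      = harmonic n * (x + y) ^ n - ∑ j ∈ range (n + 1), x ^ j * (x + y) ^ (n - j) / j := by
  induction n with
  | zero => simp [harmonicBinomialSum]
  | succ n ih =>
    rw [harmonicBinomialSum_succ, ih, sum_pow_mul_pow_div_succ, cast_harmonic_succ]
    ring

end

theorem boyadzhiev_identity_general (n : ℕ) (lam mu : ℂ) :
    ∑ k ∈ Finset.Icc 1 n, (n.choose k : ℂ) * (∑ i ∈ Finset.Icc 1 k, (1 : ℂ) / i) *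
        lam ^ (n - k) * mu ^ k
      = (∑ i ∈ Finset.Icc 1 n, (1 : ℂ) / i) * (lam + mu) ^ n -
        ∑ j ∈ Finset.Icc 1 n, lam ^ j * (lam + mu) ^ (n - j) / j := by
  have hharmonic (k : ℕ) : ∑ i ∈ Icc 1 k, (1 : ℂ) / i = harmonic k := by
    simp [harmonic_eq_sum_Icc]
  simp only [hharmonic]
  rw [sum_Icc_one_eq_sum_range (by simp), sum_Icc_one_eq_sum_range (by simp)]
  exact harmonicBinomialSum_eq lam mu n

theorem boyadzhiev_identity (n : ℕ) (hn : 1 ≤ n) (lam mu : ℂ) :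
    ∑ k ∈ Finset.Icc 1 n, (n.choose k : ℂ) * (∑ i ∈ Finset.Icc 1 k, (1 : ℂ) / i) *
        lam ^ (n - k) * mu ^ k
      = (∑ i ∈ Finset.Icc 1 n, (1 : ℂ) / i) * (lam + mu) ^ n -
        ∑ j ∈ Finset.Icc 1 n, lam ^ j * (lam + mu) ^ (n - j) / j :=
  boyadzhiev_identity_general n lam mu
end

section
/- Let q be a complex number with q ≠ 0, 1, [m] the q-integer, and qbinom the q-binomial coefficient. For positive integers n ≥ k ≥ 1 and s ≥ 1, qbinom(n,k)/[k]^s equals the sum over chains n ≥ n_1 ≥ n_2 ≥ ... ≥ n_s ≥ k of q^{(n - n_s)·k} / ([n_1]···[n_s]) · qbinom(n_s, k). -/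
noncomputable def qint (q : ℂ) (m : ℕ) : ℂ := ∑ i ∈ Finset.range m, q ^ i

noncomputable def qfact (q : ℂ) : ℕ → ℂ
  | 0 => 1
  | n + 1 => qint q (n + 1) * qfact q n

noncomputable def qbinom (q : ℂ) (n k : ℕ) : ℂ :=
  if k ≤ n then qfact q n / (qfact q k * qfact q (n - k)) else 0

/-- Weakly decreasing chains `hi ≥ f 0 ≥ f 1 ≥ ⋯ ≥ f (d-1) ≥ lo`. -/
def chainsIcc (d lo hi : ℕ) : Finset (Fin d → ℕ) :=
  (Fintype.piFinset fun _ : Fin d => Finset.Icc lo hi).filter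
    fun f => ∀ i j : Fin d, i ≤ j → f j ≤ f i

/-- `idx f j` is the paper's `n_j` (1-indexed entry of the chain `f`). -/
def idx {w : ℕ} (f : Fin w → ℕ) (j : ℕ) : ℕ :=
  if h : j - 1 < w then f ⟨j - 1, h⟩ else 0

lemma qfact_ne_zero (q : ℂ) (hm : ∀ m : ℕ, 1 ≤ m → qint q m ≠ 0) :
    ∀ n, qfact q n ≠ 0
  | 0 => one_ne_zero
  | n + 1 => mul_ne_zero (hm _ n.succ_pos) (qfact_ne_zero q hm n)

lemma qint_add (q : ℂ) (a b : ℕ) : qint q (a + b) = qint q a + q ^ a * qint q b := by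
  simp [qint, Finset.sum_range_add, pow_add, Finset.mul_sum]

lemma qbinom_self (q : ℂ) (hm : ∀ m : ℕ, 1 ≤ m → qint q m ≠ 0) (n : ℕ) :
    qbinom q n n = 1 := by
  simp [qbinom, qfact, div_self (qfact_ne_zero q hm n)]

lemma qbinom_pascal (q : ℂ) (hm : ∀ m : ℕ, 1 ≤ m → qint q m ≠ 0) (n k : ℕ) (hkn : k ≤ n) :
    qbinom q (n+1) (k+1) = qbinom q n k + q^(k+1) * qbinom q n (k+1) := by
  rcases eq_or_lt_of_le hkn with rfl | h
  · rw [qbinom_self q hm, qbinom_self q hm]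
    have : ¬ (k + 1 ≤ k) := by omega
    simp [qbinom, this]
  · obtain ⟨d, rfl⟩ : ∃ d, n = k + d + 1 := ⟨n - k - 1, by omega⟩
    have h1 : k + 1 ≤ k + d + 1 + 1 := by omega
    have h2 : k ≤ k + d + 1 := by omega
    have h3 : k + 1 ≤ k + d + 1 := by omega
    rw [qbinom, qbinom, qbinom, if_pos h1, if_pos h2, if_pos h3]
    have e1 : k + d + 1 + 1 - (k + 1) = d + 1 := by omega
    have e2 : k + d + 1 - k = d + 1 := by omega
    have e3 : k + d + 1 - (k + 1) = d := by omega
    rw [e1, e2, e3]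
    have key : qint q (k + d + 1 + 1) = qint q (k+1) + q^(k+1) * qint q (d+1) := by
      have := qint_add q (k+1) (d+1)
      rw [show k+1+(d+1) = k+d+1+1 by ring] at this
      exact this
    rw [show qfact q (k+d+1+1) = qint q (k+d+1+1) * qfact q (k+d+1) from rfl,
        show qfact q (k+1) = qint q (k+1) * qfact q k from rfl,
        show qfact q (d+1) = qint q (d+1) * qfact q d from rfl, key]
    have nk1 : qint q (k+1) ≠ 0 := hm _ (by omega)
    have nd1 : qint q (d+1) ≠ 0 := hm _ (by omega)
    have nfk : qfact q k ≠ 0 := qfact_ne_zero q hm k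
    have nfd : qfact q d ≠ 0 := qfact_ne_zero q hm d
    field_simp

lemma qbinom_absorb (q : ℂ) (hm : ∀ m : ℕ, 1 ≤ m → qint q m ≠ 0) (n k : ℕ)
    (hk : 1 ≤ k) (hkn : k ≤ n) :
    qint q k * qbinom q n k = qint q n * qbinom q (n-1) (k-1) := by
  obtain ⟨k', rfl⟩ : ∃ k', k = k' + 1 := ⟨k - 1, by omega⟩
  obtain ⟨n', rfl⟩ : ∃ n', n = n' + 1 := ⟨n - 1, by omega⟩
  have hk'n' : k' ≤ n' := by omega
  rw [qbinom, qbinom, if_pos hkn, show n'+1-1 = n' from rfl, show k'+1-1 = k' from rfl,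
      if_pos hk'n', show n'+1-(k'+1) = n'-k' by omega]
  rw [show qfact q (n'+1) = qint q (n'+1) * qfact q n' from rfl,
      show qfact q (k'+1) = qint q (k'+1) * qfact q k' from rfl]
  have : qfact q k' ≠ 0 := qfact_ne_zero q hm k'
  have : qint q (k'+1) ≠ 0 := hm _ (by omega)
  have : qfact q (n'-k') ≠ 0 := qfact_ne_zero q hm _
  field_simp

lemma sum_div_qint (q : ℂ) (hm : ∀ m : ℕ, 1 ≤ m → qint q m ≠ 0) (k : ℕ) (hk : 1 ≤ k) :
    ∀ n, k ≤ n →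
      ∑ m ∈ Finset.Icc k n, q ^ ((n - m) * k) / qint q m * qbinom q m k
        = qbinom q n k / qint q k := by
  intro n hn
  induction n, hn using Nat.le_induction with
  | base =>
    simp [qbinom_self q hm, Finset.Icc_self]
  | succ n hn ih =>
    rw [← Finset.insert_Icc_right_eq_Icc_add_one (by omega), Finset.sum_insert (by simp)]
    have step : ∀ m ∈ Finset.Icc k n,
        q ^ ((n + 1 - m) * k) / qint q m * qbinom q m k
          = q ^ k * (q ^ ((n - m) * k) / qint q m * qbinom q m k) := by
      intro m hmem
      have hmn : m ≤ n := (Finset.mem_Icc.mp hmem).2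
      rw [show (n + 1 - m) * k = k + (n - m) * k by
        have : n + 1 - m = (n - m) + 1 := by omega
        rw [this]; ring]
      rw [pow_add]; ring
    rw [Finset.sum_congr rfl step, ← Finset.mul_sum, ih]
    have hterm : q ^ ((n + 1 - (n+1)) * k) / qint q (n+1) * qbinom q (n+1) k
        = qbinom q n (k-1) / qint q k := by
      have habs := qbinom_absorb q hm (n+1) k hk (by omega)
      rw [show n+1-1 = n from rfl] at habs
      have h1 : qint q (n+1) ≠ 0 := hm _ (by omega)
      have h2 : qint q k ≠ 0 := hm _ hk
      rw [Nat.sub_self, Nat.zero_mul, pow_zero]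
      field_simp
      linear_combination habs
    rw [hterm]
    have hpas : qbinom q (n+1) k = qbinom q n (k-1) + q^k * qbinom q n k := by
      obtain ⟨k', rfl⟩ : ∃ k', k = k' + 1 := ⟨k - 1, by omega⟩
      simpa using qbinom_pascal q hm n k' (by omega)
    rw [hpas]
    field_simp
    try ring

lemma mem_chainsIcc {d lo hi : ℕ} {f : Fin d → ℕ} :
    f ∈ chainsIcc d lo hi ↔ (∀ i, lo ≤ f i ∧ f i ≤ hi) ∧ ∀ i j : Fin d, i ≤ j → f j ≤ f i := by
  simp [chainsIcc, Fintype.mem_piFinset, Finset.mem_Icc]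

lemma idx_eq {w : ℕ} (f : Fin (w+1) → ℕ) : idx f (w+1) = f ⟨w, Nat.lt_succ_self w⟩ := by
  simp [idx]

lemma idx_cons {s : ℕ} (hs : 1 ≤ s) (m : ℕ) (g : Fin s → ℕ) :
    idx (Fin.cons m g) (s+1) = idx g s := by
  obtain ⟨s', rfl⟩ : ∃ s', s = s' + 1 := ⟨s-1, by omega⟩
  rw [idx_eq, idx_eq]
  have h : (⟨s'+1, by omega⟩ : Fin (s'+2)) = Fin.succ ⟨s', by omega⟩ := rfl
  rw [h, Fin.cons_succ]

lemma idx_bounds {s lo hi : ℕ} (hs : 1 ≤ s) {g : Fin s → ℕ} (hg : g ∈ chainsIcc s lo hi) :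
    lo ≤ idx g s ∧ idx g s ≤ hi := by
  obtain ⟨s', rfl⟩ : ∃ s', s = s' + 1 := ⟨s-1, by omega⟩
  rw [mem_chainsIcc] at hg
  rw [idx_eq]
  exact hg.1 _

lemma cons_mem_chainsIcc {s lo hi m : ℕ} {g : Fin s → ℕ}
    (hmem : m ∈ Finset.Icc lo hi) (hg : g ∈ chainsIcc s lo m) :
    Fin.cons m g ∈ chainsIcc (s+1) lo hi := by
  rw [Finset.mem_Icc] at hmem
  rw [mem_chainsIcc] at hg ⊢
  obtain ⟨hg1, hg2⟩ := hg
  constructor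
  · intro i
    induction i using Fin.cases with
    | zero => simpa using hmem
    | succ j =>
      simp only [Fin.cons_succ]
      exact ⟨(hg1 j).1, le_trans (hg1 j).2 hmem.2⟩
  · intro i j hij
    induction i using Fin.cases with
    | zero =>
      induction j using Fin.cases with
      | zero => exact le_refl _
      | succ j' => simpa using (hg1 j').2
    | succ i' =>
      induction j using Fin.cases with
      | zero => simp only [Fin.le_def, Fin.val_succ, Fin.val_zero] at hij; omega
      | succ j' =>
        simp only [Fin.cons_succ]
        exact hg2 i' j' (Fin.succ_le_succ_iff.mp hij)

lemma tail_mem_chainsIcc {s lo hi : ℕ} {f : Fin (s+1) → ℕ}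
    (hf : f ∈ chainsIcc (s+1) lo hi) :
    Fin.tail f ∈ chainsIcc s lo (f 0) := by
  rw [mem_chainsIcc] at hf ⊢
  obtain ⟨h1, h2⟩ := hf
  exact ⟨fun i => ⟨(h1 i.succ).1, h2 0 i.succ (Fin.zero_le _)⟩,
    fun i j hij => h2 i.succ j.succ (Fin.succ_le_succ_iff.mpr hij)⟩

theorem qbinom_div_qint_pow (q : ℂ) (hq0 : q ≠ 0) (hq1 : q ≠ 1)
    (hm : ∀ m : ℕ, 1 ≤ m → qint q m ≠ 0)
    (n k s : ℕ) (hk : 1 ≤ k) (hkn : k ≤ n) (hs : 1 ≤ s) :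
    qbinom q n k / (qint q k) ^ s =
      ∑ f ∈ chainsIcc s k n,
        q ^ ((n - idx f s) * k) / (∏ i, qint q (f i)) * qbinom q (idx f s) k := by
  induction s, hs using Nat.le_induction generalizing n hkn with
  | base =>
    rw [pow_one, ← sum_div_qint q hm k hk n hkn]
    refine Finset.sum_nbij' (fun m => (fun _ => m : Fin 1 → ℕ)) (fun f => f 0) ?_ ?_ ?_ ?_ ?_
    · intro m hmem
      rw [mem_chainsIcc]
      rw [Finset.mem_Icc] at hmem
      exact ⟨fun _ => hmem, fun _ _ _ => le_refl _⟩
    · intro f hf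
      rw [mem_chainsIcc] at hf
      rw [Finset.mem_Icc]
      exact hf.1 0
    · intro m _; rfl
    · intro f _; funext i; rw [Subsingleton.elim i 0]
    · intro m _
      have h1 : idx (fun _ => m : Fin 1 → ℕ) 1 = m := by simp [idx]
      rw [h1, Fin.prod_univ_one]
  | succ s hs1 ih =>
    have key : (∑ f ∈ chainsIcc (s+1) k n,
          q ^ ((n - idx f (s+1)) * k) / (∏ i, qint q (f i)) * qbinom q (idx f (s+1)) k)
        = ∑ p ∈ (Finset.Icc k n).sigma (fun m => chainsIcc s k m),
            q ^ ((n - p.1) * k) / qint q p.1 *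
              (q ^ ((p.1 - idx p.2 s) * k) / (∏ i, qint q (p.2 i)) * qbinom q (idx p.2 s) k) := by
      refine Finset.sum_nbij' (fun f => (⟨f 0, Fin.tail f⟩ : Σ _ : ℕ, Fin s → ℕ))
        (fun p => Fin.cons p.1 p.2) ?_ ?_ ?_ ?_ ?_
      · intro f hf
        rw [Finset.mem_sigma]
        refine ⟨?_, tail_mem_chainsIcc hf⟩
        rw [mem_chainsIcc] at hf
        exact Finset.mem_Icc.mpr (hf.1 0)
      · intro p hp
        rw [Finset.mem_sigma] at hp
        exact cons_mem_chainsIcc hp.1 hp.2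
      · intro f _; exact Fin.cons_self_tail f
      · intro p _; simp
      · intro f hf
        have htail := tail_mem_chainsIcc hf
        have hbd := idx_bounds hs1 htail
        have hf0 : f 0 ≤ n := by
          rw [mem_chainsIcc] at hf; exact (hf.1 0).2
        have hidx : idx f (s+1) = idx (Fin.tail f) s := by
          conv_lhs => rw [← Fin.cons_self_tail f]
          exact idx_cons hs1 (f 0) (Fin.tail f)
        rw [hidx, Fin.prod_univ_succ]
        rw [show (n - idx (Fin.tail f) s) * k
            = (n - f 0) * k + (f 0 - idx (Fin.tail f) s) * k by
          have h1 : idx (Fin.tail f) s ≤ f 0 := hbd.2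
          have : n - idx (Fin.tail f) s = (n - f 0) + (f 0 - idx (Fin.tail f) s) := by omega
          rw [this]; ring]
        rw [pow_add]
        simp only [Fin.tail]
        ring
    rw [key, Finset.sum_sigma]
    have inner : ∀ m ∈ Finset.Icc k n,
        (∑ g ∈ chainsIcc s k m, q ^ ((n - m) * k) / qint q m *
            (q ^ ((m - idx g s) * k) / (∏ i, qint q (g i)) * qbinom q (idx g s) k))
          = q ^ ((n - m) * k) / qint q m * (qbinom q m k / qint q k ^ s) := by
      intro m hmem
      rw [← Finset.mul_sum, ← ih m (Finset.mem_Icc.mp hmem).1]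
    rw [Finset.sum_congr rfl inner]
    have final : ∀ m ∈ Finset.Icc k n,
        q ^ ((n - m) * k) / qint q m * (qbinom q m k / qint q k ^ s)
          = (q ^ ((n - m) * k) / qint q m * qbinom q m k) / qint q k ^ s := by
      intro m _; ring
    rw [Finset.sum_congr rfl final, ← Finset.sum_div, sum_div_qint q hm k hk n hkn,
        div_div, ← pow_succ']
end

section
/- In the ℂ-algebra generated by x and y with relation y·x = q·x·y, and with a, t central scalars, for all natural numbers m, n: y^m · ((t·x + a)·y)^n = (∏_{k=1}^{n} (q^{m+k-1}·t·x + a)) · y^{m+n}. -/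
private lemma ypow_mul_x {A : Type*} [Ring A] [Algebra ℂ A]
    (q : ℂ) (x y : A) (hrel : y * x = q • (x * y)) (m : ℕ) :
    y ^ m * x = (q ^ m) • (x * y ^ m) := by
  induction m with
  | zero => simp
  | succ m ih =>
    rw [pow_succ, mul_assoc, hrel, mul_smul_comm, ← mul_assoc, ih, smul_mul_assoc,
      smul_smul, pow_succ, mul_assoc, mul_comm (q^m) q]

theorem ypow_mul_txa_y_pow {A : Type*} [Ring A] [Algebra ℂ A]
    (q : ℂ) (hq : q ≠ 0) (x y : A) (hrel : y * x = q • (x * y))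
    (a t : ℂ) (m n : ℕ) :
    y ^ m * ((t • x + a • (1 : A)) * y) ^ n =
      ((List.range n).map fun k => (q ^ (m + k) * t) • x + a • (1 : A)).prod * y ^ (m + n) := by
  induction n generalizing m with
  | zero => simp
  | succ n ih =>
    have hstep : y ^ m * ((t • x + a • (1 : A)) * y) =
        ((q ^ m * t) • x + a • (1 : A)) * y ^ (m + 1) := by
      rw [← mul_assoc, mul_add, mul_smul_comm, ypow_mul_x q x y hrel m, mul_smul_comm,
        smul_smul, mul_comm t (q^m)]
      simp [add_mul, smul_mul_assoc, mul_assoc, pow_succ]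
    rw [pow_succ', ← mul_assoc, hstep, mul_assoc, ih (m+1), List.range_succ_eq_map]
    simp only [List.map_cons, List.prod_cons, List.map_map, Function.comp,
      Nat.succ_eq_add_one, Nat.add_zero]
    have e1 : ∀ k, m + 1 + k = m + (k + 1) := fun k => by omega
    simp only [e1, ← mul_assoc, Function.comp_def]
end

section
/- For the index s = (1) of depth 1 and any t, x, y (commuting variables over ℚ) and positive integer n: ∑_{k=1}^n C(n,k) x^k y^{n-k} (∑_{m=1}^k t^m/m) = ∑_{m=1}^n (x+y)^{n-m} ((tx+y)^m - y^m)/m. -/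
private lemma sum_Icc_one' {M : Type*} [AddCommMonoid M] (f : ℕ → M) (n : ℕ) :
    ∑ k ∈ Finset.Icc 1 n, f k = ∑ j ∈ Finset.range n, f (j + 1) := by
  induction n with
  | zero => simp
  | succ n ih => rw [Finset.sum_Icc_succ_top (by omega), Finset.sum_range_succ, ih]

private lemma cast_mul_smul {A : Type*} [CommRing A] [Algebra ℚ A] (c : ℕ) (a : A) :
    a * (c : A) = (c : ℚ) • a := by
  rw [Algebra.smul_def, map_natCast, mul_comm]

private lemma step_lemma {A : Type*} [CommRing A] [Algebra ℚ A]
    (t x y : A) (n : ℕ) (H : ℕ → A) (h0 : H 0 = 0)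
    (hstep : ∀ j : ℕ, H (j+1) = H j + (((j:ℚ)+1))⁻¹ • t ^ (j+1)) :
    ∑ k ∈ Finset.Icc 1 (n+1), ((n+1).choose k : ℚ) • (x ^ k * y ^ (n+1-k) * H k)
      = (x + y) * ∑ k ∈ Finset.Icc 1 n, (n.choose k : ℚ) • (x ^ k * y ^ (n-k) * H k)
        + (((n:ℚ)+1))⁻¹ • ((t * x + y) ^ (n+1) - y ^ (n+1)) := by
  rw [sum_Icc_one']
  have pascal : ∀ j ∈ Finset.range (n+1),
      ((n+1).choose (j+1) : ℚ) • (x ^ (j+1) * y ^ (n + 1 - (j+1)) * H (j+1))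
      = ((n.choose j : ℚ) • (x ^ (j+1) * y ^ (n - j) * H j)
          + (n.choose j : ℚ) • (x ^ (j+1) * y ^ (n - j) * (((j:ℚ)+1))⁻¹ • t ^ (j+1)))
        + (n.choose (j+1) : ℚ) • (x ^ (j+1) * y ^ (n - j) * H (j+1)) := by
    intro j _
    have h1 : n + 1 - (j+1) = n - j := by omega
    rw [h1, Nat.choose_succ_succ]
    push_cast
    rw [add_smul, hstep j, mul_add, smul_add]
  rw [Finset.sum_congr rfl pascal, Finset.sum_add_distrib, Finset.sum_add_distrib]
  have hS1 : (∑ j ∈ Finset.range (n+1),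
        (n.choose (j+1) : ℚ) • (x ^ (j+1) * y ^ (n - j) * H (j+1)))
      = y * ∑ k ∈ Finset.Icc 1 n, (n.choose k : ℚ) • (x ^ k * y ^ (n - k) * H k) := by
    rw [Finset.sum_range_succ, sum_Icc_one', Finset.mul_sum]
    simp only [Nat.choose_succ_self, Nat.cast_zero, zero_smul, add_zero]
    refine Finset.sum_congr rfl fun j hj => ?_
    have hj' : j < n := Finset.mem_range.mp hj
    have h : n - j = (n - (j+1)) + 1 := by omega
    rw [h, pow_succ, mul_smul_comm]
    ring_nf
  have hS2a : (∑ j ∈ Finset.range (n+1),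
        (n.choose j : ℚ) • (x ^ (j+1) * y ^ (n - j) * H j))
      = x * ∑ k ∈ Finset.Icc 1 n, (n.choose k : ℚ) • (x ^ k * y ^ (n - k) * H k) := by
    rw [Finset.sum_range_succ', sum_Icc_one', Finset.mul_sum]
    simp only [h0, mul_zero, smul_zero, add_zero]
    refine Finset.sum_congr rfl fun j hj => ?_
    rw [pow_succ, mul_smul_comm]
    ring_nf
  have hbin : (t * x + y) ^ (n+1) - y ^ (n+1)
      = ∑ j ∈ Finset.range (n+1), (t*x) ^ (j+1) * y ^ (n-j) * (((n+1).choose (j+1) : ℕ) : A) := by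
    rw [add_pow, Finset.sum_range_succ']
    simp [Nat.succ_sub_succ]
  have hS2b : (∑ j ∈ Finset.range (n+1),
        (n.choose j : ℚ) • (x ^ (j+1) * y ^ (n - j) * (((j:ℚ)+1))⁻¹ • t ^ (j+1)))
      = (((n:ℚ)+1))⁻¹ • ((t * x + y) ^ (n+1) - y ^ (n+1)) := by
    rw [hbin, Finset.smul_sum]
    refine Finset.sum_congr rfl fun j hj => ?_
    rw [mul_smul_comm, smul_smul, cast_mul_smul, smul_smul]
    have key : (n.choose j : ℚ) * (((j:ℚ)+1))⁻¹ = ((n:ℚ)+1)⁻¹ * (((n+1).choose (j+1) : ℕ) : ℚ) := by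
      have h := Nat.add_one_mul_choose_eq n j
      have h' : ((n:ℚ)+1) * (n.choose j : ℚ) = (((n+1).choose (j+1) : ℕ) : ℚ) * ((j:ℚ)+1) := by
        exact_mod_cast congrArg (Nat.cast : ℕ → ℚ) h
      field_simp
      linarith [h']
    rw [key]
    congr 1
    rw [mul_pow]
    ring
  rw [hS1, hS2a, hS2b]
  ring

theorem weight_one_boyadzhiev {A : Type*} [CommRing A] [Algebra ℚ A]
    (t x y : A) (n : ℕ) (hn : 1 ≤ n) :
    ∑ k ∈ Finset.Icc 1 n, (n.choose k : ℚ) •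
        (x ^ k * y ^ (n - k) * ∑ m ∈ Finset.Icc 1 k, ((m : ℚ))⁻¹ • t ^ m)
      = ∑ m ∈ Finset.Icc 1 n, ((m : ℚ))⁻¹ • ((x + y) ^ (n - m) * ((t * x + y) ^ m - y ^ m)) := by
  induction n, hn using Nat.le_induction with
  | base =>
      simp [Finset.Icc_self]
      ring
  | succ n hn ih =>
      have hR : (∑ m ∈ Finset.Icc 1 (n+1), ((m : ℚ))⁻¹ •
            ((x + y) ^ (n + 1 - m) * ((t * x + y) ^ m - y ^ m)))
          = (x + y) * (∑ m ∈ Finset.Icc 1 n, ((m : ℚ))⁻¹ •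
              ((x + y) ^ (n - m) * ((t * x + y) ^ m - y ^ m)))
            + (((n:ℚ) + 1))⁻¹ • ((t * x + y) ^ (n + 1) - y ^ (n + 1)) := by
        rw [Finset.sum_Icc_succ_top (by omega), Finset.mul_sum]
        congr 1
        · refine Finset.sum_congr rfl fun m hm => ?_
          have hm' : m ≤ n := (Finset.mem_Icc.mp hm).2
          have h : n + 1 - m = (n - m) + 1 := by omega
          rw [h, pow_succ, mul_smul_comm]
          ring_nf
        · push_cast
          simp
      rw [hR, ← ih]
      have h0 : (fun k : ℕ => ∑ m ∈ Finset.Icc 1 k, ((m : ℚ))⁻¹ • t ^ m) 0 = 0 := by simp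
      have hstep : ∀ j : ℕ, (fun k : ℕ => ∑ m ∈ Finset.Icc 1 k, ((m : ℚ))⁻¹ • t ^ m) (j+1)
          = (fun k : ℕ => ∑ m ∈ Finset.Icc 1 k, ((m : ℚ))⁻¹ • t ^ m) j
            + (((j:ℚ)+1))⁻¹ • t ^ (j+1) := by
        intro j
        simp only
        rw [Finset.sum_Icc_succ_top (by omega)]
        push_cast
        rfl
      exact step_lemma t x y n _ h0 hstep
end
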